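/- Let H ∈ M_N({±1}) be a Hadamard matrix whose first row and first column consist entirely of +1, and let D ∈ M_{N−1}({±1}) be the complementary submatrix obtained by deleting the first row and column. Then the polar decomposition D = UT is given by U = (1/√N)(D − E) and T = √N·I_{N−1} − S, where E = S = (1/(1+√N))·J_{N−1}, with J_{N−1} the all-ones (N−1)×(N−1) matrix. In particular D is an almost Hadamard sign pattern. -/

import Mathlib

open Matrix

section PosSemidefSqrt
open scoped ComplexOrder
/-- The positive semidefinite square root of a positive semidefinite matrix
(the definition `Matrix.PosSemidef.sqrt` of the older Mathlib, removed since). -/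
noncomputable def Matrix.PosSemidef.sqrt {n : Type*} [Fintype n] [DecidableEq n] {𝕜 : Type*}
    [RCLike 𝕜] {A : Matrix n n 𝕜} (hA : A.PosSemidef) : Matrix n n 𝕜 :=
  hA.1.eigenvectorUnitary.1 * diagonal ((↑) ∘ (√·) ∘ hA.1.eigenvalues) *
    (star hA.1.eigenvectorUnitary : Matrix n n 𝕜)
end PosSemidefSqrt

/-
Orthogonality of the rows and columns of the normalized Hadamard matrix to its first row and
column shows that the core `D` has all row and column sums `-1` and `DᵀD = N • 1 - J`, where
`J` is the all-ones matrix, `J² = (N - 1) • J`. With `s = √N`, all the products of `D`, `Dᵀ`, `J`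
and `1` that occur are then combinations of `1`, `J`, `D` and `DᵀD`, and the claims reduce to
scalar identities in `s` and `c = 1/(1+s)`: the value of `c` is what makes the `J`-coefficients
cancel, via `c (1 + s) = 1`. So `T = s • 1 - c • J` squares to `DᵀD` and equals
`c • (DᵀD + s • 1) ≥ 0`, while `U = s⁻¹ • (D - c • J)` is orthogonal with `U T = D`. Then
`U Dᵀ = U T Uᵀ ≥ 0`, and `0 < c < 1` gives `U` the sign pattern of `D`.
-/

theorem Matrix.transpose_mul_self_eq_smul_one {n K : Type*} [Fintype n] [DecidableEq n] [Field K]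
    {A : Matrix n n K} {c : K} (hc : c ≠ 0) (h : A * Aᵀ = c • 1) : Aᵀ * A = c • 1 := by
  have hinv : (c⁻¹ • Aᵀ) * A = 1 :=
    mul_eq_one_comm.mp <| by rw [Matrix.mul_smul, h, smul_smul, inv_mul_cancel₀ hc, one_smul]
  calc Aᵀ * A = c • ((c⁻¹ • Aᵀ) * A) := by
        rw [Matrix.smul_mul, smul_smul, mul_inv_cancel₀ hc, one_smul]
    _ = c • 1 := by rw [hinv]

open scoped ComplexOrder MatrixOrder in
theorem Matrix.PosSemidef.eq_sqrt_of_mul_self_eq {n 𝕜 : Type*} [Fintype n] [DecidableEq n]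
    [RCLike 𝕜] {A T : Matrix n n 𝕜} (hA : A.PosSemidef) (hT : T.PosSemidef) (h : T * T = A) :
    T = hA.sqrt := by
  have hsqrt : hA.sqrt = CFC.sqrt A := by
    rw [CFC.sqrt_eq_real_sqrt A hA.nonneg, cfcₙ_eq_cfc, hA.1.cfc_eq]; rfl
  rw [hsqrt, CFC.sqrt_unique h hT.nonneg]

section Normalized

variable {R : Type*} [CommRing R] {m : ℕ} {A : Matrix (Fin (m + 1)) (Fin (m + 1)) R} {c : R}

theorem submatrix_succ_mul_ones (h : A * Aᵀ = c • 1) (hrow : ∀ j, A 0 j = 1)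
    (hcol : ∀ i, A i 0 = 1) :
    A.submatrix Fin.succ Fin.succ * of (fun _ _ => 1) = -of (fun _ _ => (1 : R)) := by
  ext i j
  have hij := congr_fun₂ h i.succ 0
  simp only [mul_apply, transpose_apply, hrow, mul_one, Fin.sum_univ_succ, hcol,
    Matrix.smul_apply, one_apply_ne (Fin.succ_ne_zero i), smul_zero] at hij
  simp only [mul_apply, submatrix_apply, of_apply, mul_one, Matrix.neg_apply]
  linear_combination hij

theorem submatrix_succ_mul_transpose (h : A * Aᵀ = c • 1) (hcol : ∀ i, A i 0 = 1) :
    A.submatrix Fin.succ Fin.succ * (A.submatrix Fin.succ Fin.succ)ᵀ =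
      c • 1 - of (fun _ _ => 1) := by
  ext i j
  have hij := congr_fun₂ h i.succ j.succ
  simp only [mul_apply, transpose_apply, Fin.sum_univ_succ, hcol, Matrix.smul_apply, one_apply,
    Fin.succ_inj] at hij
  simp only [mul_apply, transpose_apply, submatrix_apply, Matrix.sub_apply, Matrix.smul_apply,
    one_apply, of_apply]
  linear_combination hij

end Normalized

section PolarFactors

variable {ι K : Type*} [Fintype ι] [DecidableEq ι] [Field K] {D J : Matrix ι ι K} {c s : K}

def polarT (s c : K) (J : Matrix ι ι K) : Matrix ι ι K := s • 1 - c • J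

def polarU (s c : K) (D J : Matrix ι ι K) : Matrix ι ι K := s⁻¹ • (D - c • J)

theorem polarT_mul_self (hJJ : J * J = (s ^ 2 - 1) • J) (hc : c * (1 + s) = 1) :
    polarT s c J * polarT s c J = s ^ 2 • 1 - J := by
  simp only [polarT, sub_mul, mul_sub, Matrix.smul_mul, Matrix.mul_smul, Matrix.one_mul,
    Matrix.mul_one, hJJ]
  match_scalars
  · ring
  · linear_combination (c * (s - 1) - 1) * hc

theorem polarU_mul_polarT (hs : s ≠ 0) (hDJ : D * J = -J) (hJJ : J * J = (s ^ 2 - 1) • J)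
    (hc : c * (1 + s) = 1) : polarU s c D J * polarT s c J = D := by
  have h : (D - c • J) * polarT s c J = s • D := by
    simp only [polarT, sub_mul, mul_sub, Matrix.smul_mul, Matrix.mul_smul, Matrix.mul_one, hJJ,
      hDJ]
    match_scalars
    · ring
    · linear_combination c * (s - 1) * hc
  rw [polarU, Matrix.smul_mul, h, smul_smul, inv_mul_cancel₀ hs, one_smul]

theorem transpose_polarU_mul_polarU (hs : s ≠ 0) (hJ : Jᵀ = J) (hDtJ : Dᵀ * J = -J)
    (hJJ : J * J = (s ^ 2 - 1) • J) (hDtD : Dᵀ * D = s ^ 2 • 1 - J) (hc : c * (1 + s) = 1) :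
    (polarU s c D J)ᵀ * polarU s c D J = 1 := by
  have hJD : J * D = -J := by
    rw [← hJ, ← transpose_transpose D, ← transpose_mul, hDtJ, transpose_neg]
  have h : (Dᵀ - c • J) * (D - c • J) = s ^ 2 • 1 := by
    simp only [sub_mul, mul_sub, Matrix.smul_mul, Matrix.mul_smul, hJJ, hDtD, hDtJ, hJD]
    match_scalars
    · ring
    · linear_combination (1 + c * (s - 1)) * hc
  rw [polarU, transpose_smul, transpose_sub, transpose_smul, hJ, Matrix.smul_mul,
    Matrix.mul_smul, h, smul_smul, smul_smul,
    show s⁻¹ * s⁻¹ * s ^ 2 = 1 by field_simp, one_smul]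

theorem polarT_eq_smul (hDtD : Dᵀ * D = s ^ 2 • 1 - J) (hc : c * (1 + s) = 1) :
    polarT s c J = c • (Dᵀ * D + s • 1) := by
  rw [polarT, hDtD]
  match_scalars
  · linear_combination -s * hc
  · ring

end PolarFactors

theorem polarT_posSemidef {ι : Type*} [Fintype ι] [DecidableEq ι] {D J : Matrix ι ι ℝ} {c s : ℝ}
    (hs : 0 ≤ s) (hc₀ : 0 ≤ c) (hDtD : Dᵀ * D = s ^ 2 • 1 - J) (hc : c * (1 + s) = 1) :
    (polarT s c J).PosSemidef := by
  rw [polarT_eq_smul hDtD hc]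
  refine .smul (.add ?_ (.smul .one hs)) hc₀
  simpa using posSemidef_conjTranspose_mul_self D

theorem posSemidef_mul_transpose_of_eq_mul {ι : Type*} [Fintype ι] {D U T : Matrix ι ι ℝ}
    (hT : T.PosSemidef) (h : D = U * T) : (U * Dᵀ).PosSemidef := by
  have hTt : Tᵀ = T := by simpa using hT.1.eq
  rw [h, transpose_mul, hTt, ← Matrix.mul_assoc]
  simpa using hT.mul_mul_conjTranspose_same U

theorem Real.sign_inv_mul_sub_eq {s c d : ℝ} (hs : 0 < s) (hc : |c| < 1) (hd : d = 1 ∨ d = -1) :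
    Real.sign (s⁻¹ * (d - c)) = d := by
  have hs' : 0 < s⁻¹ := inv_pos.mpr hs
  obtain ⟨hc₁, hc₂⟩ := abs_lt.mp hc
  rcases hd with rfl | rfl
  · exact Real.sign_of_pos (mul_pos hs' (by linarith))
  · exact Real.sign_of_neg (mul_neg_of_pos_of_neg hs' (by linarith))

/-- Let `H ∈ M_N(±1)` be Hadamard with first row and first column all `+1`,
and let `D ∈ M_{N−1}(±1)` be the complementary submatrix. Then the polar
decomposition `D = U·T` is given by `U = (1/√N)(D − E)`, `T = √N·I − S`, with
`E = S = (1/(1+√N))·J` where `J` is the all-ones matrix; in particular `D`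
is an almost Hadamard sign pattern. Here `N = n + 1`. -/
theorem stmt_16 (n : ℕ) (H : Matrix (Fin (n + 1)) (Fin (n + 1)) ℝ)
    (hsign : ∀ i j, H i j = 1 ∨ H i j = -1)
    (hH : H * Hᵀ = ((n + 1 : ℕ) : ℝ) • 1)
    (hrow : ∀ j, H 0 j = 1) (hcol : ∀ i, H i 0 = 1) :
    letI D := H.submatrix Fin.succ Fin.succ
    letI E := (1 + Real.sqrt (n + 1))⁻¹ •
      (Matrix.of fun _ _ => (1 : ℝ) : Matrix (Fin n) (Fin n) ℝ)
    letI U := (Real.sqrt (n + 1))⁻¹ • (D - E)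
    letI T := Real.sqrt (n + 1) • (1 : Matrix (Fin n) (Fin n) ℝ) - E
    Uᵀ * U = 1 ∧ T.PosSemidef ∧ D = U * T ∧
      T = (Matrix.posSemidef_conjTranspose_mul_self D).sqrt ∧
      (∀ i j, Real.sign (U i j) = D i j) ∧ (U * Dᵀ).PosSemidef := by
  set s := Real.sqrt (n + 1)
  set c := (1 + s)⁻¹
  set J : Matrix (Fin n) (Fin n) ℝ := of fun _ _ => 1
  set D := H.submatrix Fin.succ Fin.succ
  have hs : 0 < s := by positivity
  have hc : c * (1 + s) = 1 := inv_mul_cancel₀ (by positivity)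
  have hc₀ : 0 < c := by positivity
  have hc₁ : c < 1 := inv_lt_one_of_one_lt₀ (by linarith)
  have hN : ((n + 1 : ℕ) : ℝ) = s ^ 2 := by rw [Real.sq_sqrt (by positivity), Nat.cast_succ]
  rw [hN] at hH
  have hJ : Jᵀ = J := rfl
  have hJJ : J * J = (s ^ 2 - 1) • J := by
    ext; simp [J, mul_apply, ← hN]
  have hDJ : D * J = -J := submatrix_succ_mul_ones hH hrow hcol
  have hHt : Hᵀ * H = s ^ 2 • 1 := transpose_mul_self_eq_smul_one (by positivity) hH
  have hDtJ : Dᵀ * J = -J := submatrix_succ_mul_ones (A := Hᵀ) (by simpa using hHt) hcol hrow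
  have hDtD : Dᵀ * D = s ^ 2 • 1 - J :=
    submatrix_succ_mul_transpose (A := Hᵀ) (by simpa using hHt) hrow
  have hT : (polarT s c J).PosSemidef := polarT_posSemidef hs.le hc₀.le hDtD hc
  have hUT : polarU s c D J * polarT s c J = D := polarU_mul_polarT hs.ne' hDJ hJJ hc
  refine ⟨transpose_polarU_mul_polarU hs.ne' hJ hDtJ hJJ hDtD hc, hT, hUT.symm, ?_, ?_,
    posSemidef_mul_transpose_of_eq_mul hT hUT.symm⟩
  · have hT2 : polarT s c J * polarT s c J = Dᴴ * D := by
      rw [polarT_mul_self hJJ hc, conjTranspose_eq_transpose_of_trivial, hDtD]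
    exact (posSemidef_conjTranspose_mul_self D).eq_sqrt_of_mul_self_eq hT hT2
  · intro i j
    have hUij : polarU s c D J i j = s⁻¹ * (D i j - c) := by simp [polarU, J]
    change Real.sign (polarU s c D J i j) = D i j
    rw [hUij]
    exact Real.sign_inv_mul_sub_eq hs (by rwa [abs_of_pos hc₀]) (hsign i.succ j.succ)
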